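/- MNAR propensity identification via conditional independence: in a missing data model with fully observed X₁, partially observed X₂, X₃ with indicators R₂, R₃, if R₂ ⫫ (X₂, X₃, R₃) | X₁ and R₃ ⫫ R₂ | (X₁, X₂), then p(R₂, R₃ | X₁, X₂) = p(R₂ | X₁) · p(R₃ | X₁, X₂, R₂ = 1), i.e., the joint propensity is identified as a function of observed data evaluated on R₂ = 1 cases. -/
import Mathlib


open scoped Classical

/-- Probability of an event under a pmf `w` on a finite sample space. -/
noncomputable def Pr {Ω : Type*} [Fintype Ω] (w : Ω → ℝ) (E : Ω → Prop) : ℝ :=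
  ∑ ω, if E ω then w ω else 0

lemma Pr_congr {Ω : Type*} [Fintype Ω] (w : Ω → ℝ) {E F : Ω → Prop}
    (h : ∀ ω, E ω ↔ F ω) : Pr w E = Pr w F := by
  unfold Pr; apply Finset.sum_congr rfl; intro ω _; simp [h ω]

lemma Pr_fiber {Ω α : Type*} [Fintype Ω] [Fintype α] (w : Ω → ℝ)
    (f : Ω → α) (P : Ω → Prop) :
    ∑ a, Pr w (fun ω => P ω ∧ f ω = a) = Pr w P := by
  unfold Pr
  rw [Finset.sum_comm]
  apply Finset.sum_congr rfl
  intro ω _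
  by_cases hP : P ω
  · simp [hP]
  · simp [hP]

lemma Pr_mono {Ω : Type*} [Fintype Ω] (w : Ω → ℝ) (hw : ∀ ω, 0 ≤ w ω)
    {E F : Ω → Prop} (h : ∀ ω, E ω → F ω) : Pr w E ≤ Pr w F := by
  unfold Pr
  apply Finset.sum_le_sum
  intro ω _
  by_cases hE : E ω
  · simp [hE, h ω hE]
  · by_cases hF : F ω <;> simp [hE, hF, hw ω]


/-- MNAR propensity identification. With fully observed `X₁` and
partially observed `X₂, X₃` (indicators `R₂, R₃`), if
(a) the conditional law of `R₂` given `(X₁,X₂,X₃)` depends only on `X₁`,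
(b) the conditional law of `R₃` given `(X₁,X₂,X₃,R₂)` depends only on `(X₁,X₂)`,
(c) `P(R₂ = 1 | X₁, X₂) > 0` wherever needed,
then `P(R₂=r₂, R₃=r₃ | X₁=x₁, X₂=x₂) = P(R₂=r₂ | X₁=x₁) · P(R₃=r₃ | X₁=x₁, X₂=x₂, R₂=1)`,
i.e. the joint propensity is identified from observed (complete on `X₂`) cases. -/
theorem mnar_propensity_identification {Ω 𝒳₁ 𝒳₂ 𝒳₃ : Type*}
    [Fintype Ω] [Fintype 𝒳₁] [Fintype 𝒳₂] [Fintype 𝒳₃]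
    (w : Ω → ℝ) (hw : ∀ ω, 0 ≤ w ω) (hw1 : ∑ ω, w ω = 1)
    (X₁ : Ω → 𝒳₁) (X₂ : Ω → 𝒳₂) (X₃ : Ω → 𝒳₃) (R₂ R₃ : Ω → Bool)
    (φ₂ : 𝒳₁ → Bool → ℝ)
    (ha : ∀ x₁ x₂ x₃ (r₂ : Bool),
      Pr w (fun ω => R₂ ω = r₂ ∧ X₁ ω = x₁ ∧ X₂ ω = x₂ ∧ X₃ ω = x₃) =
        φ₂ x₁ r₂ * Pr w (fun ω => X₁ ω = x₁ ∧ X₂ ω = x₂ ∧ X₃ ω = x₃))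
    (φ₃ : 𝒳₁ → 𝒳₂ → Bool → ℝ)
    (hb : ∀ x₁ x₂ x₃ (r₂ r₃ : Bool),
      Pr w (fun ω =>
          R₃ ω = r₃ ∧ R₂ ω = r₂ ∧ X₁ ω = x₁ ∧ X₂ ω = x₂ ∧ X₃ ω = x₃) =
        φ₃ x₁ x₂ r₃ *
          Pr w (fun ω => R₂ ω = r₂ ∧ X₁ ω = x₁ ∧ X₂ ω = x₂ ∧ X₃ ω = x₃))
    (hc : ∀ x₁ x₂, 0 < Pr w (fun ω => X₁ ω = x₁ ∧ X₂ ω = x₂) →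
      0 < Pr w (fun ω => R₂ ω = true ∧ X₁ ω = x₁ ∧ X₂ ω = x₂)) :
    ∀ x₁ x₂ (r₂ r₃ : Bool), 0 < Pr w (fun ω => X₁ ω = x₁ ∧ X₂ ω = x₂) →
      Pr w (fun ω => R₂ ω = r₂ ∧ R₃ ω = r₃ ∧ X₁ ω = x₁ ∧ X₂ ω = x₂) /
          Pr w (fun ω => X₁ ω = x₁ ∧ X₂ ω = x₂) =
        (Pr w (fun ω => R₂ ω = r₂ ∧ X₁ ω = x₁) / Pr w (fun ω => X₁ ω = x₁)) *
        (Pr w (fun ω => R₃ ω = r₃ ∧ R₂ ω = true ∧ X₁ ω = x₁ ∧ X₂ ω = x₂) /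
          Pr w (fun ω => R₂ ω = true ∧ X₁ ω = x₁ ∧ X₂ ω = x₂)) := by
  intro x₁ x₂ r₂ r₃ hpos
  -- marginalized version of (a)
  have ha2 : ∀ (r : Bool),
      Pr w (fun ω => R₂ ω = r ∧ X₁ ω = x₁ ∧ X₂ ω = x₂) =
        φ₂ x₁ r * Pr w (fun ω => X₁ ω = x₁ ∧ X₂ ω = x₂) := by
    intro r
    have h1 := Pr_fiber w X₃ (fun ω => R₂ ω = r ∧ X₁ ω = x₁ ∧ X₂ ω = x₂)
    have h2 := Pr_fiber w X₃ (fun ω => X₁ ω = x₁ ∧ X₂ ω = x₂)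
    calc Pr w (fun ω => R₂ ω = r ∧ X₁ ω = x₁ ∧ X₂ ω = x₂)
        = ∑ x₃, Pr w (fun ω => (R₂ ω = r ∧ X₁ ω = x₁ ∧ X₂ ω = x₂) ∧ X₃ ω = x₃) := h1.symm
      _ = ∑ x₃, Pr w (fun ω => R₂ ω = r ∧ X₁ ω = x₁ ∧ X₂ ω = x₂ ∧ X₃ ω = x₃) := by
          apply Finset.sum_congr rfl; intro x₃ _; exact Pr_congr w (by tauto)
      _ = ∑ x₃, φ₂ x₁ r * Pr w (fun ω => X₁ ω = x₁ ∧ X₂ ω = x₂ ∧ X₃ ω = x₃) := by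
          apply Finset.sum_congr rfl; intro x₃ _; exact ha x₁ x₂ x₃ r
      _ = φ₂ x₁ r * ∑ x₃, Pr w (fun ω => X₁ ω = x₁ ∧ X₂ ω = x₂ ∧ X₃ ω = x₃) := by
          rw [Finset.mul_sum]
      _ = φ₂ x₁ r * Pr w (fun ω => X₁ ω = x₁ ∧ X₂ ω = x₂) := by
          congr 1
          rw [← h2]
          apply Finset.sum_congr rfl; intro x₃ _; exact Pr_congr w (by tauto)
  -- marginalized version of (a) over x₂ as well
  have ha1 : ∀ (r : Bool),
      Pr w (fun ω => R₂ ω = r ∧ X₁ ω = x₁) =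
        φ₂ x₁ r * Pr w (fun ω => X₁ ω = x₁) := by
    intro r
    have h1 := Pr_fiber w (fun ω => (X₂ ω, X₃ ω)) (fun ω => R₂ ω = r ∧ X₁ ω = x₁)
    have h2 := Pr_fiber w (fun ω => (X₂ ω, X₃ ω)) (fun ω => X₁ ω = x₁)
    calc Pr w (fun ω => R₂ ω = r ∧ X₁ ω = x₁)
        = ∑ p : 𝒳₂ × 𝒳₃, Pr w (fun ω => (R₂ ω = r ∧ X₁ ω = x₁) ∧ (X₂ ω, X₃ ω) = p) := h1.symm
      _ = ∑ p : 𝒳₂ × 𝒳₃, Pr w (fun ω => R₂ ω = r ∧ X₁ ω = x₁ ∧ X₂ ω = p.1 ∧ X₃ ω = p.2) := by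
          apply Finset.sum_congr rfl; intro p _
          exact Pr_congr w (by intro ω; simp [Prod.ext_iff]; tauto)
      _ = ∑ p : 𝒳₂ × 𝒳₃, φ₂ x₁ r * Pr w (fun ω => X₁ ω = x₁ ∧ X₂ ω = p.1 ∧ X₃ ω = p.2) := by
          apply Finset.sum_congr rfl; intro p _; exact ha x₁ p.1 p.2 r
      _ = φ₂ x₁ r * ∑ p : 𝒳₂ × 𝒳₃, Pr w (fun ω => X₁ ω = x₁ ∧ X₂ ω = p.1 ∧ X₃ ω = p.2) := by
          rw [Finset.mul_sum]
      _ = φ₂ x₁ r * Pr w (fun ω => X₁ ω = x₁) := by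
          congr 1
          rw [← h2]
          apply Finset.sum_congr rfl; intro p _
          exact Pr_congr w (by intro ω; simp [Prod.ext_iff])
  -- marginalized version of (b)
  have hb2 : ∀ (r r' : Bool),
      Pr w (fun ω => R₃ ω = r' ∧ R₂ ω = r ∧ X₁ ω = x₁ ∧ X₂ ω = x₂) =
        φ₃ x₁ x₂ r' * Pr w (fun ω => R₂ ω = r ∧ X₁ ω = x₁ ∧ X₂ ω = x₂) := by
    intro r r'
    have h1 := Pr_fiber w X₃ (fun ω => R₃ ω = r' ∧ R₂ ω = r ∧ X₁ ω = x₁ ∧ X₂ ω = x₂)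
    have h2 := Pr_fiber w X₃ (fun ω => R₂ ω = r ∧ X₁ ω = x₁ ∧ X₂ ω = x₂)
    calc Pr w (fun ω => R₃ ω = r' ∧ R₂ ω = r ∧ X₁ ω = x₁ ∧ X₂ ω = x₂)
        = ∑ x₃, Pr w (fun ω => (R₃ ω = r' ∧ R₂ ω = r ∧ X₁ ω = x₁ ∧ X₂ ω = x₂) ∧ X₃ ω = x₃) := h1.symm
      _ = ∑ x₃, Pr w (fun ω => R₃ ω = r' ∧ R₂ ω = r ∧ X₁ ω = x₁ ∧ X₂ ω = x₂ ∧ X₃ ω = x₃) := by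
          apply Finset.sum_congr rfl; intro x₃ _; exact Pr_congr w (by tauto)
      _ = ∑ x₃, φ₃ x₁ x₂ r' * Pr w (fun ω => R₂ ω = r ∧ X₁ ω = x₁ ∧ X₂ ω = x₂ ∧ X₃ ω = x₃) := by
          apply Finset.sum_congr rfl; intro x₃ _; exact hb x₁ x₂ x₃ r r'
      _ = φ₃ x₁ x₂ r' * ∑ x₃, Pr w (fun ω => R₂ ω = r ∧ X₁ ω = x₁ ∧ X₂ ω = x₂ ∧ X₃ ω = x₃) := by
          rw [Finset.mul_sum]
      _ = φ₃ x₁ x₂ r' * Pr w (fun ω => R₂ ω = r ∧ X₁ ω = x₁ ∧ X₂ ω = x₂) := by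
          congr 1
          rw [← h2]
          apply Finset.sum_congr rfl; intro x₃ _; exact Pr_congr w (by tauto)
  have hX1pos : 0 < Pr w (fun ω => X₁ ω = x₁) :=
    lt_of_lt_of_le hpos (Pr_mono w hw (by tauto))
  have hcpos := hc x₁ x₂ hpos
  -- compute everything in terms of φ's
  have key : Pr w (fun ω => R₂ ω = r₂ ∧ R₃ ω = r₃ ∧ X₁ ω = x₁ ∧ X₂ ω = x₂) =
      φ₃ x₁ x₂ r₃ * (φ₂ x₁ r₂ * Pr w (fun ω => X₁ ω = x₁ ∧ X₂ ω = x₂)) := by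
    rw [Pr_congr w (F := fun ω => R₃ ω = r₃ ∧ R₂ ω = r₂ ∧ X₁ ω = x₁ ∧ X₂ ω = x₂) (by tauto),
      hb2, ha2]
  rw [key, ha1, hb2, ha2]
  have htrue : φ₂ x₁ true ≠ 0 := by
    intro h
    rw [ha2 true, h, zero_mul] at hcpos
    exact lt_irrefl 0 hcpos
  field_simp
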